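/- Let G be an oriented hypergraph. The contributor-dual map (S,c) ↦ (T,c*), where T is the unused edge set of (S,c) and c*(ω(t_v)) = (h_v, t_{π_c(v)}), is a bijection from the set of diagonally reduced contributors of G onto the set of diagonally reduced contributors of the incidence dual G*; this bijection preserves csgn and interchanges reduced sets with unused sets: if (S,c) has reduced set S and unused edge set T, then (T,c*) has reduced set T and unused set S. -/

import Mathlib

open Matrix
open scoped Classical

noncomputable section

/-- An oriented hypergraph `G = (V, E, I, ς, ω, σ)`: `vtx = ς` assigns each incidence
its vertex, `edg = ω` assigns each incidence its edge, and `sgn = σ` is its sign. -/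
structure OHG (V E I : Type*) where
  vtx : I → V
  edg : I → E
  sgn : I → ℤˣ

/-- The incidence dual `G* = (E, V, I, ω, ς, σ)`. -/
def OHG.dual {V E I : Type*} (G : OHG V E I) : OHG E V I :=
  ⟨G.edg, G.vtx, G.sgn⟩

section Defs

variable {V E I : Type*} [Fintype V] [DecidableEq V] [Fintype E] [DecidableEq E]
  [Fintype I] [DecidableEq I]

/-- A diagonally reduced contributor `(S, c)`: `c : V∖S → I × I`, tails sit at their
vertices, tail and head share an edge, the head map is a permutation of `V∖S`, and `c`
is edge-monic. -/
def IsDiagRed (G : OHG V E I) (S : Finset V) (c : {v : V // v ∉ S} → I × I) : Prop :=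
  (∀ v, G.vtx (c v).1 = v.1) ∧ (∀ v, G.edg (c v).1 = G.edg (c v).2) ∧
    Set.BijOn (fun v : {v : V // v ∉ S} => G.vtx (c v).2) Set.univ {w : V | w ∉ S} ∧
    Function.Injective fun v : {v : V // v ∉ S} => G.edg (c v).1

/-- The unused edge set `T = E ∖ {ω (t_v) : v ∈ V∖S}` of a diagonally reduced
contributor. -/
def unusedT (G : OHG V E I) (S : Finset V) (c : {v : V // v ∉ S} → I × I) :
    Finset E :=
  Finset.univ.filter fun e => ∀ v : {v : V // v ∉ S}, G.edg (c v).1 ≠ e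

/-- The head map of a diagonally reduced contributor, extended to all of `V` by the
identity on `S`. -/
def gmapD (G : OHG V E I) (S : Finset V) (c : {v : V // v ∉ S} → I × I) : V → V :=
  fun v => if h : v ∈ S then v else G.vtx (c ⟨v, h⟩).2

/-- The orbit of `v` under iteration of `f` (for `f` a bijection of a finite type this
is the full cycle of `v`). -/
def orbitOf {α : Type*} [Fintype α] [DecidableEq α] (f : α → α) (a : α) : Finset α :=
  Finset.univ.filter fun b => ∃ n : ℕ, f^[n] a = b

/-- The set of orbits of `f`. -/
def orbitsOf {α : Type*} [Fintype α] [DecidableEq α] (f : α → α) :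
    Finset (Finset α) :=
  Finset.univ.image (orbitOf f)

/-- `ec c`: the number of orbits of `π_c` of even cardinality. -/
def ecD (G : OHG V E I) (S : Finset V) (c : {v : V // v ∉ S} → I × I) : ℕ :=
  ((orbitsOf (gmapD G S c)).filter fun O => Even O.card).card

/-- `bs c`: the number of backsteps of a diagonally reduced contributor. -/
def bsD (G : OHG V E I) (S : Finset V) (c : {v : V // v ∉ S} → I × I) : ℕ :=
  (Finset.univ.filter fun v : {v : V // v ∉ S} => (c v).1 = (c v).2).card

/-- A negative orbit: not a single backstep, and the product of the adjacency signs
`-σ(t_v)·σ(h_v)` over the orbit is `-1`. -/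
def NegOrbitD (G : OHG V E I) (S : Finset V) (c : {v : V // v ∉ S} → I × I)
    (O : Finset V) : Prop :=
  (¬ ∃ v : {v : V // v ∉ S}, O = {v.1} ∧ (c v).1 = (c v).2) ∧
    ∏ v ∈ Finset.univ.filter (fun v : {v : V // v ∉ S} => v.1 ∈ O),
      (-(G.sgn (c v).1 * G.sgn (c v).2)) = (-1 : ℤˣ)

/-- `nc c`: the number of negative orbits of a diagonally reduced contributor. -/
def ncD (G : OHG V E I) (S : Finset V) (c : {v : V // v ∉ S} → I × I) : ℕ :=
  ((orbitsOf (gmapD G S c)).filter (NegOrbitD G S c)).card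

/-- The sign `csgn c = (-1) ^ (ec c + nc c + bs c)` of a diagonally reduced
contributor. -/
def csgnD (G : OHG V E I) (S : Finset V) (c : {v : V // v ∉ S} → I × I) : ℤ :=
  (-1) ^ (ecD G S c + ncD G S c + bsD G S c)

/-- The incidence matrix of an oriented hypergraph. -/
def incM (G : OHG V E I) : Matrix V E ℤ :=
  Matrix.of fun v e =>
    ∑ i ∈ Finset.univ.filter (fun i => G.vtx i = v ∧ G.edg i = e), (G.sgn i : ℤ)

/-- The Laplacian `L = H Hᵀ` of an oriented hypergraph. -/
def lapM (G : OHG V E I) : Matrix V V ℤ :=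
  incM G * (incM G)ᵀ

end Defs

variable {V E I : Type*} [Fintype V] [DecidableEq V] [Fintype E] [DecidableEq E]
  [Fintype I] [DecidableEq I]

/-- The contributor-dual `c*` of a (diagonally reduced) contributor `(S, c)`: on the
edge `ω (t_v)` it takes the value `(h_v, t_{π_c v})`. -/
noncomputable def dualCont (G : OHG V E I) (S : Finset V)
    (c : {v : V // v ∉ S} → I × I) :
    {e : E // e ∉ unusedT G S c} → I × I := fun e =>
  have hex : ∃ v : {v : V // v ∉ S}, G.edg (c v).1 = e.1 := by
    have h2 := e.2
    simp only [unusedT, Finset.mem_filter, Finset.mem_univ, true_and, not_forall,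
      not_not] at h2
    exact h2
  ((c (Classical.choose hex)).2,
    if h : G.vtx (c (Classical.choose hex)).2 ∈ S then (c (Classical.choose hex)).1
    else (c ⟨G.vtx (c (Classical.choose hex)).2, h⟩).1)

/-!
The edges used by a diagonally reduced contributor `(S, c)` are in bijection with `V ∖ S`
through `φ : v ↦ ω(t_v)`, and `c*(φ v) = (h_v, t_{π v})`. Since `ς(h_v) = π v` and
`ω(t_{π v}) = φ (π v)`, the contributor `c*` of `G*` is again diagonally reduced, its head
map is `φ ∘ π ∘ φ⁻¹` and its unused vertices are exactly `S`; dualizing twice gives back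
`(t_{π v}, h_{π v}) = c (π v)` at the vertex `π v`, so the map is an involution up to
`G** = G`. Conjugation by `φ` carries the cycles of `π` to those of `π*`, preserving their
lengths, their sign products (the factors `σ(t_v)` are only permuted along the cycle) and
backsteps (`h_v = t_{π v}` forces `v = π v` by edge-monicity), hence `csgn`.
-/

set_option linter.unusedSectionVars false

section Orbits

variable {α β : Type*} [Fintype α] [DecidableEq α] [Fintype β] [DecidableEq β]

theorem orbitOf_eq_singleton {f : α → α} {a : α} (h : f a = a) : orbitOf f a = {a} := by
  ext b
  simp only [orbitOf, Finset.mem_filter, Finset.mem_univ, true_and, Finset.mem_singleton,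
    Function.iterate_fixed h, exists_const, eq_comm]

theorem image_orbitOf_of_semiconj {f : α → α} {g : β → β} {φ : α → β}
    (h : Function.Semiconj φ f g) (a : α) : (orbitOf f a).image φ = orbitOf g (φ a) := by
  ext b
  simp only [orbitOf, Finset.mem_image, Finset.mem_filter, Finset.mem_univ, true_and]
  constructor
  · rintro ⟨_, ⟨n, rfl⟩, rfl⟩
    exact ⟨n, ((h.iterate_right n) a).symm⟩
  · rintro ⟨n, rfl⟩
    exact ⟨f^[n] a, ⟨n, rfl⟩, (h.iterate_right n) a⟩

theorem image_orbitOf_self {f : α → α} (hf : Function.Injective f) (a : α) :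
    (orbitOf f a).image f = orbitOf f a := by
  refine Finset.eq_of_subset_of_card_le ?_ (Finset.card_image_of_injective _ hf).ge
  simp only [Finset.image_subset_iff, orbitOf, Finset.mem_filter, Finset.mem_univ, true_and]
  rintro _ ⟨n, rfl⟩
  exact ⟨n + 1, Function.iterate_succ_apply' f n a⟩

theorem card_filter_orbitsOf_of_semiconj {f : α → α} {g : β → β} {φ : α → β}
    (hφ : Function.Injective φ) (h : Function.Semiconj φ f g)
    (Q : Finset β → Prop) [DecidablePred Q]
    (hout : ∀ b ∉ Set.range φ, g b = b ∧ ¬ Q {b}) :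
    ((orbitsOf g).filter Q).card =
      ((orbitsOf f).filter fun O => Q (O.image φ)).card := by
  suffices (orbitsOf g).filter Q =
      ((orbitsOf f).filter fun O => Q (O.image φ)).image (Finset.image φ) by
    rw [this, Finset.card_image_of_injective _ (Finset.image_injective hφ)]
  ext O
  simp only [orbitsOf, Finset.mem_filter, Finset.mem_image, Finset.mem_univ, true_and]
  constructor
  · rintro ⟨⟨b, rfl⟩, hQ⟩
    by_cases hb : b ∈ Set.range φ
    · obtain ⟨a, rfl⟩ := hb
      rw [← image_orbitOf_of_semiconj h] at hQ ⊢
      exact ⟨_, ⟨⟨a, rfl⟩, hQ⟩, rfl⟩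
    · rw [orbitOf_eq_singleton (hout b hb).1] at hQ
      exact absurd hQ (hout b hb).2
  · rintro ⟨_, ⟨⟨a, rfl⟩, hQ⟩, rfl⟩
    exact ⟨⟨φ a, (image_orbitOf_of_semiconj h a).symm⟩, hQ⟩

end Orbits

theorem sigma_finset_mk_eq {α β : Type*} {A B : Finset α} (f : {a // a ∉ A} → β)
    (g : {a // a ∉ B} → β) (h : A = B)
    (hfg : ∀ a (hA : a ∉ A) (hB : a ∉ B), f ⟨a, hA⟩ = g ⟨a, hB⟩) :
    (⟨A, f⟩ : Σ S : Finset α, {a // a ∉ S} → β) = ⟨B, g⟩ := by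
  subst h
  exact congrArg _ (funext fun a => hfg a.1 a.2 a.2)

section Contributor

variable {G : OHG V E I} {S : Finset V} {c : {v : V // v ∉ S} → I × I}

theorem mem_unusedT {e : E} : e ∈ unusedT G S c ↔ ∀ v, G.edg (c v).1 ≠ e :=
  Finset.mem_filter_univ _

theorem not_mem_unusedT {e : E} : e ∉ unusedT G S c ↔ ∃ v, G.edg (c v).1 = e := by
  simp [mem_unusedT]

variable (G S c) in
/-- The edge bijection `φ : V ∖ S → E ∖ T`, `v ↦ ω(t_v)`. -/
def usedEdge (v : {v : V // v ∉ S}) : {e : E // e ∉ unusedT G S c} :=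
  ⟨G.edg (c v).1, not_mem_unusedT.2 ⟨v, rfl⟩⟩

theorem usedEdge_surjective : Function.Surjective (usedEdge G S c) := fun e =>
  let ⟨v, hv⟩ := not_mem_unusedT.1 e.2
  ⟨v, Subtype.ext hv⟩

theorem negOrbitD_image_val_iff (O : Finset {v : V // v ∉ S}) :
    NegOrbitD G S c (O.image Subtype.val) ↔
      (¬ ∃ v, O = {v} ∧ (c v).1 = (c v).2) ∧
        ∏ v ∈ O, -(G.sgn (c v).1 * G.sgn (c v).2) = -1 := by
  have hsingle (v : {v : V // v ∉ S}) : O.image Subtype.val = {v.1} ↔ O = {v} := by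
    rw [← Finset.image_singleton Subtype.val v]
    exact (Finset.image_injective Subtype.val_injective).eq_iff
  have hfilter :
      Finset.univ.filter (fun v : {v : V // v ∉ S} => v.1 ∈ O.image Subtype.val) = O := by
    ext v
    simp [Subtype.val_injective.mem_finset_image]
  simp only [NegOrbitD, hsingle, hfilter]

theorem gmapD_of_mem {b : V} (hb : b ∈ S) : gmapD G S c b = b := dif_pos hb

theorem not_negOrbitD_singleton {b : V} (hb : b ∈ S) : ¬ NegOrbitD G S c {b} := by
  rintro ⟨-, hprod⟩
  have hempty : Finset.univ.filter (fun v : {v : V // v ∉ S} => v.1 ∈ ({b} : Finset V)) = ∅ :=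
    Finset.filter_false_of_mem fun v _ hv => v.2 (Finset.mem_singleton.1 hv ▸ hb)
  rw [hempty, Finset.prod_empty] at hprod
  exact absurd (congrArg Units.val hprod) (by decide)

theorem isDiagRed_of_injective (htail : ∀ v, G.vtx (c v).1 = v.1)
    (hedge : ∀ v, G.edg (c v).1 = G.edg (c v).2) (hhead : ∀ v, G.vtx (c v).2 ∉ S)
    (hhead_inj : Function.Injective fun v => G.vtx (c v).2)
    (hmonic : Function.Injective fun v => G.edg (c v).1) : IsDiagRed G S c := by
  let π : {v : V // v ∉ S} → {v : V // v ∉ S} := fun v => ⟨G.vtx (c v).2, hhead v⟩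
  have hπ : Function.Injective π := fun v w h => hhead_inj (congrArg Subtype.val h)
  refine ⟨htail, hedge, ⟨fun v _ => hhead v, hhead_inj.injOn, fun w hw => ?_⟩, hmonic⟩
  obtain ⟨v, hv⟩ := Finite.injective_iff_surjective.1 hπ ⟨w, hw⟩
  exact ⟨v, Set.mem_univ v, congrArg Subtype.val hv⟩

namespace IsDiagRed

variable (hc : IsDiagRed G S c)
include hc

/-- The permutation `π_c` of `V ∖ S`. -/
def perm : {v : V // v ∉ S} → {v : V // v ∉ S} :=
  fun v => ⟨G.vtx (c v).2, hc.2.2.1.1 (Set.mem_univ v)⟩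

theorem perm_injective : Function.Injective hc.perm := fun v w h =>
  hc.2.2.1.2.1 (Set.mem_univ v) (Set.mem_univ w) (congrArg Subtype.val h)

theorem perm_surjective : Function.Surjective hc.perm :=
  Finite.injective_iff_surjective.1 hc.perm_injective

theorem usedEdge_injective : Function.Injective (usedEdge G S c) := fun _ _ h =>
  hc.2.2.2 (congrArg Subtype.val h)

theorem dualCont_usedEdge (v : {v : V // v ∉ S}) :
    dualCont G S c (usedEdge G S c v) = ((c v).2, (c (hc.perm v)).1) := by
  have hex : ∃ w, G.edg (c w).1 = (usedEdge G S c v).1 := ⟨v, rfl⟩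
  have hw : hex.choose = v := hc.2.2.2 hex.choose_spec
  show ((c hex.choose).2, if h : G.vtx (c hex.choose).2 ∈ S then (c hex.choose).1
    else (c ⟨G.vtx (c hex.choose).2, h⟩).1) = _
  simp only [hw]
  rw [dif_neg (show G.vtx (c v).2 ∉ S from (hc.perm v).2)]
  rfl

theorem dual_edg_dualCont_usedEdge (v : {v : V // v ∉ S}) :
    G.dual.edg (dualCont G S c (usedEdge G S c v)).1 = (hc.perm v).1 := by
  rw [hc.dualCont_usedEdge]
  rfl

theorem dual_vtx_dualCont_usedEdge (v : {v : V // v ∉ S}) :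
    G.dual.vtx (dualCont G S c (usedEdge G S c v)).2 = (usedEdge G S c (hc.perm v)).1 := by
  rw [hc.dualCont_usedEdge]
  rfl

theorem dualCont_usedEdge_fst_eq_snd_iff (v : {v : V // v ∉ S}) :
    (dualCont G S c (usedEdge G S c v)).1 = (dualCont G S c (usedEdge G S c v)).2 ↔
      (c v).1 = (c v).2 := by
  rw [hc.dualCont_usedEdge]
  constructor
  · intro h
    have hv : v = hc.perm v := hc.2.2.2 ((hc.2.1 v).trans (congrArg G.edg h))
    rw [← hv] at h
    exact h.symm
  · intro h
    have hv : hc.perm v = v := Subtype.ext ((congrArg G.vtx h).symm.trans (hc.1 v))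
    rw [hv, h]

theorem dual : IsDiagRed G.dual (unusedT G S c) (dualCont G S c) := by
  refine isDiagRed_of_injective (usedEdge_surjective.forall.2 fun v => ?_)
    (usedEdge_surjective.forall.2 fun v => ?_)
    (usedEdge_surjective.forall.2 fun v => ?_) ?_ ?_
  · rw [hc.dualCont_usedEdge]
    exact (hc.2.1 v).symm
  · rw [hc.dual_edg_dualCont_usedEdge, hc.dualCont_usedEdge]
    exact (hc.1 (hc.perm v)).symm
  · rw [hc.dual_vtx_dualCont_usedEdge]
    exact (usedEdge G S c (hc.perm v)).2
  · intro e₁ e₂ h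
    obtain ⟨v, rfl⟩ := usedEdge_surjective e₁
    obtain ⟨w, rfl⟩ := usedEdge_surjective e₂
    simp only [hc.dual_vtx_dualCont_usedEdge] at h
    exact congrArg _ (hc.perm_injective (hc.usedEdge_injective (Subtype.ext h)))
  · intro e₁ e₂ h
    obtain ⟨v, rfl⟩ := usedEdge_surjective e₁
    obtain ⟨w, rfl⟩ := usedEdge_surjective e₂
    simp only [hc.dual_edg_dualCont_usedEdge] at h
    exact congrArg _ (hc.perm_injective (Subtype.ext h))

theorem unusedT_dual : unusedT G.dual (unusedT G S c) (dualCont G S c) = S := by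
  ext x
  rw [mem_unusedT, usedEdge_surjective.forall]
  simp only [hc.dual_edg_dualCont_usedEdge]
  constructor
  · intro h
    by_contra hx
    obtain ⟨v, hv⟩ := hc.perm_surjective ⟨x, hx⟩
    exact h v (congrArg Subtype.val hv)
  · intro hx v hv
    exact (hc.perm v).2 (hv ▸ hx)

theorem dualCont_dualCont :
    (⟨unusedT G.dual (unusedT G S c) (dualCont G S c),
        dualCont G.dual (unusedT G S c) (dualCont G S c)⟩ :
      Σ S : Finset V, {v : V // v ∉ S} → I × I) = ⟨S, c⟩ := by
  refine sigma_finset_mk_eq _ _ hc.unusedT_dual fun x hx' hx => ?_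
  obtain ⟨v, hv⟩ := hc.perm_surjective ⟨x, hx⟩
  have hdual_perm : hc.dual.perm (usedEdge G S c v) = usedEdge G S c (hc.perm v) :=
    Subtype.ext (hc.dual_vtx_dualCont_usedEdge v)
  have hx_eq : (⟨x, hx'⟩ : {x // x ∉ unusedT G.dual (unusedT G S c) (dualCont G S c)}) =
      usedEdge G.dual (unusedT G S c) (dualCont G S c) (usedEdge G S c v) :=
    Subtype.ext ((congrArg Subtype.val hv).symm.trans (hc.dual_edg_dualCont_usedEdge v).symm)
  rw [hx_eq, hc.dual.dualCont_usedEdge, hdual_perm, hc.dualCont_usedEdge, hc.dualCont_usedEdge,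
    ← hv]

theorem semiconj_val_gmapD : Function.Semiconj Subtype.val hc.perm (gmapD G S c) := fun v => by
  rw [gmapD, dif_neg v.2]
  rfl

theorem semiconj_usedEdge_gmapD_dual :
    Function.Semiconj (Subtype.val ∘ usedEdge G S c) hc.perm
      (gmapD G.dual (unusedT G S c) (dualCont G S c)) := fun v => by
  rw [gmapD, dif_neg (show (Subtype.val ∘ usedEdge G S c) v ∉ _ from (usedEdge G S c v).2)]
  exact (hc.dual_vtx_dualCont_usedEdge v).symm

theorem card_filter_orbitsOf_gmapD (Q : Finset V → Prop) [DecidablePred Q]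
    (hQ : ∀ b ∈ S, ¬ Q {b}) :
    ((orbitsOf (gmapD G S c)).filter Q).card =
      ((orbitsOf hc.perm).filter fun O => Q (O.image Subtype.val)).card := by
  refine card_filter_orbitsOf_of_semiconj Subtype.val_injective hc.semiconj_val_gmapD Q
    fun b hb => ?_
  have hbS : b ∈ S := by_contra fun h => hb ⟨⟨b, h⟩, rfl⟩
  exact ⟨gmapD_of_mem hbS, hQ b hbS⟩

theorem card_filter_orbitsOf_gmapD_dual (Q : Finset E → Prop) [DecidablePred Q]
    (hQ : ∀ e ∈ unusedT G S c, ¬ Q {e}) :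
    ((orbitsOf (gmapD G.dual (unusedT G S c) (dualCont G S c))).filter Q).card =
      ((orbitsOf hc.perm).filter fun O => Q (O.image (Subtype.val ∘ usedEdge G S c))).card := by
  refine card_filter_orbitsOf_of_semiconj (Subtype.val_injective.comp hc.usedEdge_injective)
    hc.semiconj_usedEdge_gmapD_dual Q fun e he => ?_
  have heT : e ∈ unusedT G S c := by_contra fun h =>
    let ⟨v, hv⟩ := usedEdge_surjective ⟨e, h⟩
    he ⟨v, congrArg Subtype.val hv⟩
  exact ⟨gmapD_of_mem heT, hQ e heT⟩

theorem prod_sign_dualCont (O : Finset {v : V // v ∉ S}) (hO : O.image hc.perm = O) :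
    ∏ e ∈ O.image (usedEdge G S c),
        -(G.dual.sgn (dualCont G S c e).1 * G.dual.sgn (dualCont G S c e).2) =
      ∏ v ∈ O, -(G.sgn (c v).1 * G.sgn (c v).2) := by
  rw [Finset.prod_image hc.usedEdge_injective.injOn]
  simp only [hc.dualCont_usedEdge]
  calc ∏ v ∈ O, -(G.sgn (c v).2 * G.sgn (c (hc.perm v)).1)
      = (-1) ^ O.card * ((∏ v ∈ O, G.sgn (c v).2) * ∏ v ∈ O, G.sgn (c (hc.perm v)).1) := by
        rw [Finset.prod_neg, Finset.prod_mul_distrib]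
    _ = (-1) ^ O.card * ((∏ v ∈ O, G.sgn (c v).2) * ∏ v ∈ O, G.sgn (c v).1) := by
        rw [← Finset.prod_image (f := fun v => G.sgn (c v).1) hc.perm_injective.injOn, hO]
    _ = ∏ v ∈ O, -(G.sgn (c v).1 * G.sgn (c v).2) := by
        rw [Finset.prod_neg, Finset.prod_mul_distrib, mul_comm (∏ v ∈ O, G.sgn (c v).2)]

theorem negOrbitD_dual_image_iff (O : Finset {v : V // v ∉ S}) (hO : O.image hc.perm = O) :
    NegOrbitD G.dual (unusedT G S c) (dualCont G S c) (O.image (Subtype.val ∘ usedEdge G S c)) ↔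
      NegOrbitD G S c (O.image Subtype.val) := by
  have hsingle (v : {v : V // v ∉ S}) :
      O.image (usedEdge G S c) = {usedEdge G S c v} ↔ O = {v} := by
    rw [← Finset.image_singleton (usedEdge G S c) v]
    exact (Finset.image_injective hc.usedEdge_injective).eq_iff
  rw [← Finset.image_image, negOrbitD_image_val_iff, negOrbitD_image_val_iff,
    hc.prod_sign_dualCont O hO, usedEdge_surjective.exists]
  simp only [hsingle, hc.dualCont_usedEdge_fst_eq_snd_iff]

theorem bsD_dual : bsD G.dual (unusedT G S c) (dualCont G S c) = bsD G S c := by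
  refine (Finset.card_nbij (usedEdge G S c) (fun v hv => ?_) hc.usedEdge_injective.injOn
    fun e he => ?_).symm
  · simpa [hc.dualCont_usedEdge_fst_eq_snd_iff] using hv
  · obtain ⟨v, rfl⟩ := usedEdge_surjective e
    exact ⟨v, by simpa [hc.dualCont_usedEdge_fst_eq_snd_iff] using he, rfl⟩

theorem ecD_dual : ecD G.dual (unusedT G S c) (dualCont G S c) = ecD G S c := by
  rw [ecD, ecD, hc.card_filter_orbitsOf_gmapD_dual _ (fun _ _ => by simp),
    hc.card_filter_orbitsOf_gmapD _ (fun _ _ => by simp)]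
  simp only [Finset.card_image_of_injective _ Subtype.val_injective,
    Finset.card_image_of_injective _ (Subtype.val_injective.comp hc.usedEdge_injective)]

theorem ncD_dual : ncD G.dual (unusedT G S c) (dualCont G S c) = ncD G S c := by
  rw [ncD, ncD, hc.card_filter_orbitsOf_gmapD_dual _ fun _ => not_negOrbitD_singleton,
    hc.card_filter_orbitsOf_gmapD _ fun _ => not_negOrbitD_singleton]
  refine congrArg Finset.card (Finset.filter_congr fun O hO => ?_)
  obtain ⟨a, -, rfl⟩ := Finset.mem_image.1 hO
  exact hc.negOrbitD_dual_image_iff _ (image_orbitOf_self hc.perm_injective a)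

theorem csgnD_dual : csgnD G.dual (unusedT G S c) (dualCont G S c) = csgnD G S c := by
  rw [csgnD, csgnD, hc.ecD_dual, hc.ncD_dual, hc.bsD_dual]

end IsDiagRed

end Contributor

/-- The contributor-dual map `(S, c) ↦ (T, c*)` is a bijection from
the diagonally reduced contributors of `G` onto those of the incidence dual `G*`; it
preserves `csgn` and interchanges reduced sets with unused sets: `(T, c*)` has reduced
set the unused edge set `T` of `(S, c)` and unused set `S`. -/
theorem dualCont_bijOn (G : OHG V E I) :
    Set.BijOn
      (fun p : Σ S : Finset V, {v : V // v ∉ S} → I × I =>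
        (⟨unusedT G p.1 p.2, dualCont G p.1 p.2⟩ :
          Σ T : Finset E, {e : E // e ∉ T} → I × I))
      {p | IsDiagRed G p.1 p.2} {q | IsDiagRed G.dual q.1 q.2} ∧
    ∀ p : Σ S : Finset V, {v : V // v ∉ S} → I × I, IsDiagRed G p.1 p.2 →
      csgnD G.dual (unusedT G p.1 p.2) (dualCont G p.1 p.2) = csgnD G p.1 p.2 ∧
      unusedT G.dual (unusedT G p.1 p.2) (dualCont G p.1 p.2) = p.1 := by
  refine ⟨Set.InvOn.bijOn (f' := fun q : Σ T : Finset E, {e : E // e ∉ T} → I × I =>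
      (⟨unusedT G.dual q.1 q.2, dualCont G.dual q.1 q.2⟩ :
        Σ S : Finset V, {v : V // v ∉ S} → I × I))
    ⟨fun p hp => hp.dualCont_dualCont, fun q hq => hq.dualCont_dualCont⟩
    (fun p hp => hp.dual) (fun q hq => hq.dual),
    fun p hp => ⟨hp.csgnD_dual, hp.unusedT_dual⟩⟩
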